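/- The space ℂ[SL(2,ℂ)] of regular functions is completely reducible under the two-sided translation action of SL(2,ℂ) × SL(2,ℂ) given by ((g₁,g₂)·f)(x) = f(g₁⁻¹ x g₂): there exists a family (Wᵢ) of finite-dimensional subspaces of ℂ[SL(2,ℂ)], each invariant under this action and each having no invariant subspace other than 0 and itself, such that ℂ[SL(2,ℂ)] is the internal direct sum of the Wᵢ. -/

import Mathlib

/-
ℂ[SL(2,ℂ)] is the direct sum of the spaces `Wₙ` spanned by the matrix coefficients of `Symⁿ`,
the action of SL(2,ℂ) on binary forms of degree `n`; these are polynomials in the entries, and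
they are multiplicative, so each `Wₙ` is invariant.

`Wₙ` is irreducible: translating by diagonal matrices has pairwise distinct eigenvalues on the
matrix coefficients, so an invariant subspace `U ≠ 0` contains one of them, and translating that
one by the unipotents `u(1)` and `l(1)` produces all the others.

The `Wₙ` span: using `ad - bc = 1`, every monomial of degree `N` in the entries is, modulo
monomials of degree `N - 2`, a nonzero multiple of a matrix coefficient of `Symᴺ`.

The `Wₙ` are independent because all matrix coefficients together are linearly independent:
on `u(x) l(y) u(z)` the coefficient `(n, p, q)` contains the monomial `x ^ p * y ^ n * z ^ (n - q)`,
which no other coefficient of degree at most `n` contains.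
-/

open Matrix MvPolynomial

noncomputable section

abbrev SL2 : Type := Matrix.SpecialLinearGroup (Fin 2) ℂ

def IsRegularFn (f : SL2 → ℂ) : Prop :=
  ∃ P : MvPolynomial (Fin 4) ℂ,
    ∀ A : SL2, f A = MvPolynomial.eval ![A.1 0 0, A.1 0 1, A.1 1 0, A.1 1 1] P

def RegFns : Submodule ℂ (SL2 → ℂ) where
  carrier := {f | IsRegularFn f}
  add_mem' := by
    rintro f g ⟨P, hP⟩ ⟨Q, hQ⟩
    exact ⟨P + Q, fun A => by simp [hP A, hQ A]⟩
  zero_mem' := ⟨0, fun A => by simp⟩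
  smul_mem' := by
    rintro c f ⟨P, hP⟩
    exact ⟨c • P, fun A => by simp [hP A, MvPolynomial.smul_eval]⟩

def TranslationInvariant (U : Submodule ℂ (SL2 → ℂ)) : Prop :=
  ∀ g₁ g₂ : SL2, ∀ f ∈ U, (fun x => f (g₁⁻¹ * x * g₂)) ∈ U

lemma Finset.sum_range_ite_add_eq {M : Type*} [AddCommMonoid M] (m e p : ℕ) (g : ℕ → M)
    (hg : ∀ f, m < f → g f = 0) :
    ∑ f ∈ Finset.range (m + 1), (if e + f = p then g f else 0) =
      if e ≤ p then g (p - e) else 0 := by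
  split_ifs with h
  · rw [Finset.sum_eq_single (p - e) (fun f _ hf => if_neg (by omega)), if_pos (by omega)]
    intro hf
    rw [if_pos (by omega), hg _ (by rw [Finset.mem_range] at hf; omega)]
  · exact Finset.sum_eq_zero fun f _ => if_neg (by omega)

theorem Submodule.mem_of_sum_mem_of_eigenvectors {K V ι : Type*} [Field K] [AddCommGroup V]
    [Module K V] {U : Submodule K V} {T : Module.End K V} (hT : U ≤ U.comap T) {μ : ι → K}
    (hμ : Function.Injective μ) {s : Finset ι} {v : ι → V} (hv : ∀ i ∈ s, T (v i) = μ i • v i)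
    (hs : ∑ i ∈ s, v i ∈ U) {i : ι} (hi : i ∈ s) : v i ∈ U := by
  have hind := (Module.End.eigenspaces_iSupIndep (U.mapQ U T hT)).comp hμ
  rw [iSupIndep_iff_finsetSum_eq_zero_imp_eq_zero] at hind
  rw [← Submodule.Quotient.mk_eq_zero]
  refine hind s (fun i => U.mkQ (v i)) (fun i hi => ?_) ?_ i hi
  · simp [hv i hi]
  · rwa [← map_sum, Submodule.mkQ_apply, Submodule.Quotient.mk_eq_zero]

theorem linearIndependent_of_triangular {ι R V α : Type*} [CommRing R] [NoZeroDivisors R]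
    [AddCommGroup V] [Module R V] [LinearOrder α] {v : ι → V} (φ : ι → V →ₗ[R] R) (ρ : ι → α)
    (hdiag : ∀ i, φ i (v i) ≠ 0) (htri : ∀ i j, φ i (v j) ≠ 0 → j = i ∨ ρ i < ρ j) :
    LinearIndependent R v := by
  classical
  rw [linearIndependent_iff']
  intro s g hsum
  by_contra! h
  obtain ⟨i, hi, hgi⟩ := h
  obtain ⟨j, hj, hmax⟩ := (s.filter (g · ≠ 0)).exists_max_image ρ ⟨i, by simp [hi, hgi]⟩
  rw [Finset.mem_filter] at hj
  have hφ := congrArg (φ j) hsum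
  rw [map_sum, map_zero, Finset.sum_eq_single j, map_smul, smul_eq_mul] at hφ
  · exact mul_ne_zero hj.2 (hdiag j) hφ
  · intro k hk hkj
    rw [map_smul, smul_eq_mul, mul_eq_zero, or_iff_not_imp_left]
    intro hgk
    by_contra hne
    rcases htri j k hne with rfl | hlt
    · exact hkj rfl
    · exact (hmax k (Finset.mem_filter.2 ⟨hk, hgk⟩)).not_gt hlt
  · exact fun h => absurd hj.1 h

lemma pow_mul_inv_pow_mul_pow {K : Type*} [Field K] {a : K} (ha : a ≠ 0) {n p : ℕ} (hp : p ≤ n) :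
    a ^ p * a⁻¹ ^ (n - p) * a ^ n = a ^ (2 * p) := by
  obtain ⟨k, rfl⟩ := Nat.exists_eq_add_of_le hp
  rw [Nat.add_sub_cancel_left, inv_pow, pow_add]
  field_simp
  ring

section BinaryForms

variable {R S : Type*} [CommRing R] [CommRing S]

def expPair (a b : ℕ) : Fin 2 →₀ ℕ := Finsupp.single 0 a + Finsupp.single 1 b

@[simp] lemma expPair_apply_zero (a b : ℕ) : expPair a b 0 = a := by simp [expPair]

@[simp] lemma expPair_apply_one (a b : ℕ) : expPair a b 1 = b := by simp [expPair]

lemma expPair_inj {a b a' b' : ℕ} : expPair a b = expPair a' b' ↔ a = a' ∧ b = b' := by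
  refine ⟨fun h => ⟨by simpa using DFunLike.congr_fun h 0, by simpa using DFunLike.congr_fun h 1⟩,
    fun h => by rw [h.1, h.2]⟩

lemma expPair_add (a b a' b' : ℕ) : expPair a b + expPair a' b' = expPair (a + a') (b + b') := by
  ext i; fin_cases i <;> simp

lemma C_mul_X_pow_mul_X_pow (c : R) (a b : ℕ) :
    C c * (X 0 ^ a * X 1 ^ b) = monomial (expPair a b) c := by
  rw [X_pow_eq_monomial, X_pow_eq_monomial, monomial_mul, C_mul_monomial, expPair, mul_one, mul_one]

def linSubst (A : Matrix (Fin 2) (Fin 2) R) :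
    MvPolynomial (Fin 2) R →ₐ[R] MvPolynomial (Fin 2) R :=
  aeval fun i => ∑ j, C (A j i) * X j

lemma linSubst_X (A : Matrix (Fin 2) (Fin 2) R) (i : Fin 2) :
    linSubst A (X i) = C (A 0 i) * X 0 + C (A 1 i) * X 1 := by
  simp [linSubst, Fin.sum_univ_two]

lemma linSubst_mul (A B : Matrix (Fin 2) (Fin 2) R) :
    linSubst (A * B) = (linSubst A).comp (linSubst B) := by
  refine algHom_ext fun i => ?_
  simp only [linSubst, AlgHom.comp_apply, aeval_X, map_sum, _root_.map_mul, algHom_C,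
    algebraMap_eq, mul_apply, Finset.sum_mul, Finset.mul_sum]
  rw [Finset.sum_comm]
  exact Finset.sum_congr rfl fun j _ => Finset.sum_congr rfl fun k _ => by ring

lemma MvPolynomial.IsHomogeneous.linSubst {P : MvPolynomial (Fin 2) R} {n : ℕ}
    (hP : P.IsHomogeneous n) (A : Matrix (Fin 2) (Fin 2) R) : (linSubst A P).IsHomogeneous n := by
  unfold _root_.linSubst
  simpa using hP.aeval (fun i => ∑ j, C (A j i) * X j) fun i =>
    IsHomogeneous.sum _ _ _ fun j _ => (isHomogeneous_X R j).C_mul (A j i)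

lemma isHomogeneous_X_pow_mul_X_pow {n q : ℕ} (hq : q ≤ n) :
    (X 0 ^ q * X 1 ^ (n - q) : MvPolynomial (Fin 2) R).IsHomogeneous n := by
  simpa [Nat.add_sub_cancel' hq] using
    (isHomogeneous_X_pow (R := R) 0 q).mul (isHomogeneous_X_pow 1 (n - q))

lemma MvPolynomial.IsHomogeneous.eq_sum_range {P : MvPolynomial (Fin 2) R} {n : ℕ}
    (hP : P.IsHomogeneous n) :
    P = ∑ r ∈ Finset.range (n + 1),
      C (coeff (expPair r (n - r)) P) * (X 0 ^ r * X 1 ^ (n - r)) := by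
  ext w
  simp only [C_mul_X_pow_mul_X_pow, coeff_sum, coeff_monomial]
  by_cases hw : w 0 + w 1 = n
  · have hwe : w = expPair (w 0) (n - w 0) := by
      rw [DFunLike.ext_iff, Fin.forall_fin_two, expPair_apply_zero, expPair_apply_one]
      omega
    rw [Finset.sum_eq_single (w 0), if_pos hwe.symm, ← hwe]
    · intro r _ hr
      exact if_neg fun h => hr (expPair_inj.1 (h.trans hwe)).1
    · intro h
      exact absurd (Finset.mem_range.2 (by omega)) h
  · rw [hP.coeff_eq_zero (by rwa [Finsupp.degree_eq_sum, Fin.sum_univ_two]), eq_comm]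
    refine Finset.sum_eq_zero fun r hr => if_neg fun h => hw ?_
    rw [← h, expPair_apply_zero, expPair_apply_one]
    have := Finset.mem_range.1 hr
    omega

/-- The matrix coefficients of `A` acting on binary forms of degree `n`, in the basis
`X 0 ^ p * X 1 ^ (n - p)`. -/
def symCoeff (n p q : ℕ) (A : Matrix (Fin 2) (Fin 2) R) : R :=
  coeff (expPair p (n - p)) (linSubst A (X 0 ^ q * X 1 ^ (n - q)))

lemma symCoeff_mul {n q : ℕ} (hq : q ≤ n) (p : ℕ) (A B : Matrix (Fin 2) (Fin 2) R) :
    symCoeff n p q (A * B) = ∑ r ∈ Finset.range (n + 1), symCoeff n p r A * symCoeff n r q B := by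
  rw [symCoeff, linSubst_mul, AlgHom.comp_apply,
    ((isHomogeneous_X_pow_mul_X_pow hq).linSubst B).eq_sum_range, map_sum, coeff_sum]
  refine Finset.sum_congr rfl fun r _ => ?_
  rw [_root_.map_mul, ← algebraMap_eq, AlgHom.commutes, algebraMap_eq, coeff_C_mul, mul_comm]
  rfl

lemma linearForm_pow (a c : R) (m : ℕ) :
    (C a * X 0 + C c * X 1 : MvPolynomial (Fin 2) R) ^ m =
      ∑ k ∈ Finset.range (m + 1),
        monomial (expPair k (m - k)) (m.choose k * a ^ k * c ^ (m - k)) := by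
  rw [add_pow]
  refine Finset.sum_congr rfl fun k _ => ?_
  rw [← C_mul_X_pow_mul_X_pow, C_mul, C_mul, map_natCast, C_pow, C_pow]
  ring

lemma symCoeff_eq_sum {n q : ℕ} (hq : q ≤ n) (p : ℕ) (A : Matrix (Fin 2) (Fin 2) R) :
    symCoeff n p q A = ∑ e ∈ Finset.range (q + 1), ∑ f ∈ Finset.range (n - q + 1),
      if e + f = p then
        (q.choose e * (n - q).choose f : ℕ) * A 0 0 ^ e * A 0 1 ^ f * A 1 0 ^ (q - e) *
          A 1 1 ^ (n - q - f)
      else 0 := by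
  rw [symCoeff, _root_.map_mul, map_pow, map_pow, linSubst_X, linSubst_X, linearForm_pow,
    linearForm_pow, Finset.sum_mul_sum, coeff_sum]
  refine Finset.sum_congr rfl fun e he => ?_
  rw [coeff_sum]
  refine Finset.sum_congr rfl fun f hf => ?_
  simp only [Finset.mem_range] at he hf
  rw [monomial_mul, expPair_add, coeff_monomial]
  by_cases h : e + f = p
  · rw [if_pos (expPair_inj.2 ⟨h, by omega⟩), if_pos h]; push_cast; ring
  · rw [if_neg (fun h' => h (expPair_inj.1 h').1), if_neg h]

lemma symCoeff_diag (n p q : ℕ) (a d : R) :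
    symCoeff n p q !![a, 0; 0, d] = if p = q then a ^ p * d ^ (n - p) else 0 := by
  have h : linSubst !![a, 0; 0, d] (X 0 ^ q * X 1 ^ (n - q)) =
      monomial (expPair q (n - q)) (a ^ q * d ^ (n - q)) := by
    simp only [_root_.map_mul, map_pow, linSubst_X, of_apply, cons_val', cons_val_zero,
      cons_val_one, empty_val', cons_val_fin_one, map_zero, zero_mul, add_zero, zero_add]
    rw [← C_mul_X_pow_mul_X_pow, C_mul, C_pow, C_pow]
    ring
  rw [symCoeff, h, coeff_monomial]
  by_cases hpq : p = q
  · rw [hpq, if_pos rfl, if_pos rfl]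
  · rw [if_neg fun h => hpq (expPair_inj.1 h).1.symm, if_neg hpq]

lemma symCoeff_upper {n q : ℕ} (hq : q ≤ n) (p : ℕ) (x : R) :
    symCoeff n p q !![1, x; 0, 1] =
      if q ≤ p then ((n - q).choose (p - q) : R) * x ^ (p - q) else 0 := by
  rw [symCoeff_eq_sum hq, Finset.sum_eq_single_of_mem q (by simp)]
  · rw [Finset.sum_range_ite_add_eq _ _ _ _ fun f hf => by simp [Nat.choose_eq_zero_of_lt hf]]
    simp
  · intro e he hne
    refine Finset.sum_eq_zero fun f _ => ?_
    simp [zero_pow (show q - e ≠ 0 by rw [Finset.mem_range] at he; omega)]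

lemma symCoeff_lower {n q : ℕ} (hq : q ≤ n) (p : ℕ) (y : R) :
    symCoeff n p q !![1, 0; y, 1] = if p ≤ q then (q.choose p : R) * y ^ (q - p) else 0 := by
  rw [symCoeff_eq_sum hq, Finset.sum_congr rfl fun e _ => Finset.sum_range_ite_add_eq _ _ _ _
    fun f hf => by simp [Nat.choose_eq_zero_of_lt hf]]
  have h : ∀ e, (e ≤ p ∧ p - e = 0) ↔ p = e := by omega
  simp [zero_pow_eq, ← ite_and, h, Finset.sum_ite_eq]

lemma map_linSubst (f : R →+* S) (A : Matrix (Fin 2) (Fin 2) R) (P : MvPolynomial (Fin 2) R) :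
    map f (linSubst A P) = linSubst (A.map f) (map f P) := by
  induction P using MvPolynomial.induction_on with
  | C a => simp
  | add P Q hP hQ => simp only [map_add, hP, hQ]
  | mul_X P i hP => simp [hP, linSubst_X]

lemma map_symCoeff (f : R →+* S) (n p q : ℕ) (A : Matrix (Fin 2) (Fin 2) R) :
    f (symCoeff n p q A) = symCoeff n p q (A.map f) := by
  rw [symCoeff, symCoeff, ← coeff_map, map_linSubst]
  simp

end BinaryForms

def upperUnipotent (x : ℂ) : SL2 := ⟨!![1, x; 0, 1], by simp⟩

def lowerUnipotent (y : ℂ) : SL2 := ⟨!![1, 0; y, 1], by simp⟩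

def torus (s : ℂ) (hs : s ≠ 0) : SL2 := ⟨!![s, 0; 0, s⁻¹], by simp [hs]⟩

def twoSidedTranslate (g₁ g₂ : SL2) : (SL2 → ℂ) →ₗ[ℂ] (SL2 → ℂ) :=
  LinearMap.funLeft ℂ ℂ fun x => g₁ * x * g₂

lemma TranslationInvariant.le_comap_twoSidedTranslate {U : Submodule ℂ (SL2 → ℂ)}
    (hU : TranslationInvariant U) (g₁ g₂ : SL2) : U ≤ U.comap (twoSidedTranslate g₁ g₂) :=
  fun f hf => by
    have h := hU g₁⁻¹ g₂ f hf
    rw [inv_inv] at h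
    exact h

def symCoeffFn (n : ℕ) (i : Fin (n + 1) × Fin (n + 1)) (A : SL2) : ℂ := symCoeff n i.1 i.2 A.1

def coeffSpace (n : ℕ) : Submodule ℂ (SL2 → ℂ) := Submodule.span ℂ (Set.range (symCoeffFn n))

lemma twoSidedTranslate_symCoeffFn (n : ℕ) (i : Fin (n + 1) × Fin (n + 1)) (g₁ g₂ : SL2) :
    twoSidedTranslate g₁ g₂ (symCoeffFn n i) =
      ∑ j, (symCoeff n i.1 j.1 g₁.1 * symCoeff n j.2 i.2 g₂.1) • symCoeffFn n j := by
  ext x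
  simp only [twoSidedTranslate, LinearMap.funLeft_apply, symCoeffFn, Finset.sum_apply,
    Pi.smul_apply, smul_eq_mul, Fintype.sum_prod_type]
  rw [show (g₁ * x * g₂).1 = g₁.1 * x.1 * g₂.1 from rfl, symCoeff_mul i.2.is_le, Finset.sum_range,
    Finset.sum_comm]
  refine Finset.sum_congr rfl fun t _ => ?_
  rw [symCoeff_mul t.is_le, Finset.sum_range, Finset.sum_mul]
  exact Finset.sum_congr rfl fun r _ => by ring

lemma coeffSpace_translationInvariant (n : ℕ) : TranslationInvariant (coeffSpace n) := by
  intro g₁ g₂ f hf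
  suffices coeffSpace n ≤ (coeffSpace n).comap (twoSidedTranslate g₁⁻¹ g₂) from this hf
  refine Submodule.span_le.2 ?_
  rintro _ ⟨i, rfl⟩
  rw [SetLike.mem_coe, Submodule.mem_comap, twoSidedTranslate_symCoeffFn]
  exact Submodule.sum_mem _ fun j _ => Submodule.smul_mem _ _ (Submodule.subset_span ⟨j, rfl⟩)

lemma coeffSpace_le_regFns (n : ℕ) : coeffSpace n ≤ RegFns := by
  refine Submodule.span_le.2 ?_
  rintro _ ⟨i, rfl⟩
  refine ⟨symCoeff n i.1 i.2 !![X 0, X 1; X 2, X 3], fun A => ?_⟩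
  rw [symCoeffFn, map_symCoeff]
  congr
  ext a b
  fin_cases a <;> fin_cases b <;> simp

instance (n : ℕ) : FiniteDimensional ℂ (coeffSpace n) :=
  FiniteDimensional.span_of_finite ℂ (Set.finite_range _)

/-- Eigenvalues of the torus translation `f ↦ f (torus (2 ^ (n + 1)) * · * torus 2)` on
`symCoeffFn n`; they are pairwise distinct because `(p, q) ↦ (n + 1) * p + q` is injective. -/
def torusWeight (n : ℕ) (i : Fin (n + 1) × Fin (n + 1)) : ℂ :=
  (2 ^ (n + 1)) ^ (i.1 : ℕ) * (2 ^ (n + 1))⁻¹ ^ (n - i.1) * (2 ^ (i.2 : ℕ) * 2⁻¹ ^ (n - i.2))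

lemma torusWeight_injective (n : ℕ) : Function.Injective (torusWeight n) := by
  have key : ∀ i, torusWeight n i * ((2 ^ (n + 1)) ^ n * 2 ^ n) =
      ((4 ^ (finProdFinEquiv i : ℕ) : ℕ) : ℂ) := by
    intro i
    rw [show torusWeight n i * ((2 ^ (n + 1)) ^ n * 2 ^ n) =
        ((2 ^ (n + 1)) ^ (i.1 : ℕ) * (2 ^ (n + 1))⁻¹ ^ (n - i.1) * (2 ^ (n + 1)) ^ n) *
          (2 ^ (i.2 : ℕ) * 2⁻¹ ^ (n - i.2) * 2 ^ n) by rw [torusWeight]; ring,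
      pow_mul_inv_pow_mul_pow (by norm_num) i.1.is_le,
      pow_mul_inv_pow_mul_pow two_ne_zero i.2.is_le]
    simp only [finProdFinEquiv_apply_val, Nat.cast_pow, Nat.cast_ofNat]
    rw [show (4 : ℂ) = 2 ^ 2 by norm_num, ← pow_mul, ← pow_mul, ← pow_add]
    ring_nf
  intro i j h
  apply finProdFinEquiv.injective
  apply Fin.val_injective
  apply Nat.pow_right_injective (by norm_num : 2 ≤ 4)
  apply Nat.cast_injective (R := ℂ)
  rw [← key, ← key, h]

lemma twoSidedTranslate_torus_symCoeffFn (n : ℕ) (i : Fin (n + 1) × Fin (n + 1)) :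
    twoSidedTranslate (torus (2 ^ (n + 1)) (by norm_num)) (torus 2 two_ne_zero) (symCoeffFn n i) =
      torusWeight n i • symCoeffFn n i := by
  rw [twoSidedTranslate_symCoeffFn, Fintype.sum_eq_single i fun j hj => ?_]
  · simp [torus, symCoeff_diag, torusWeight]
  · have : j.1 ≠ i.1 ∨ j.2 ≠ i.2 := by rw [← not_and_or, ← Prod.ext_iff]; exact hj
    rcases this with h | h <;>
      simp [torus, symCoeff_diag, Fin.val_ne_of_ne h, Fin.val_ne_of_ne h.symm]

lemma symCoeffFn_mem_of_sum_mem {n : ℕ} {U : Submodule ℂ (SL2 → ℂ)} (hU : TranslationInvariant U)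
    {γ : Fin (n + 1) × Fin (n + 1) → ℂ} (hsum : ∑ j, γ j • symCoeffFn n j ∈ U)
    {i : Fin (n + 1) × Fin (n + 1)} (hi : γ i ≠ 0) : symCoeffFn n i ∈ U := by
  refine (Submodule.smul_mem_iff U hi).1 <|
    Submodule.mem_of_sum_mem_of_eigenvectors
      (hU.le_comap_twoSidedTranslate (torus (2 ^ (n + 1)) (by norm_num)) (torus 2 two_ne_zero))
      (torusWeight_injective n) (fun j _ => ?_) hsum (Finset.mem_univ i)
  rw [map_smul, twoSidedTranslate_torus_symCoeffFn, smul_comm]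

lemma symCoeffFn_mem_of_translate {n : ℕ} {U : Submodule ℂ (SL2 → ℂ)}
    (hU : TranslationInvariant U) {i : Fin (n + 1) × Fin (n + 1)} (hi : symCoeffFn n i ∈ U)
    (g₁ g₂ : SL2) {j : Fin (n + 1) × Fin (n + 1)}
    (hj : symCoeff n i.1 j.1 g₁.1 * symCoeff n j.2 i.2 g₂.1 ≠ 0) : symCoeffFn n j ∈ U := by
  have h := hU.le_comap_twoSidedTranslate g₁ g₂ hi
  rw [Submodule.mem_comap, twoSidedTranslate_symCoeffFn] at h
  exact symCoeffFn_mem_of_sum_mem hU h hj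

/-- Translating by `(lowerUnipotent 1, upperUnipotent 1)` leads from any matrix coefficient to
the one at `(n, n)`, and translating that one by `(upperUnipotent 1, lowerUnipotent 1)` to all
others. -/
lemma coeffSpace_le_of_ne_bot {n : ℕ} {U : Submodule ℂ (SL2 → ℂ)} (hle : U ≤ coeffSpace n)
    (hU : TranslationInvariant U) (hne : U ≠ ⊥) : coeffSpace n ≤ U := by
  obtain ⟨f, hfU, hf0⟩ := (Submodule.ne_bot_iff U).1 hne
  obtain ⟨γ, rfl⟩ := (Submodule.mem_span_range_iff_exists_fun ℂ).1 (hle hfU)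
  obtain ⟨i, hi⟩ : ∃ i, γ i ≠ 0 := by
    by_contra! h
    simp [h] at hf0
  have hlast : symCoeffFn n (Fin.last n, Fin.last n) ∈ U := by
    refine symCoeffFn_mem_of_translate hU (symCoeffFn_mem_of_sum_mem hU hfU hi)
      (lowerUnipotent 1) (upperUnipotent 1) ?_
    simp [lowerUnipotent, upperUnipotent, symCoeff_lower, symCoeff_upper, i.1.is_le, i.2.is_le,
      Nat.choose_ne_zero i.1.is_le]
  refine Submodule.span_le.2 (Set.range_subset_iff.2 fun j => ?_)
  refine symCoeffFn_mem_of_translate hU hlast (upperUnipotent 1) (lowerUnipotent 1) ?_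
  simp [lowerUnipotent, upperUnipotent, symCoeff_lower, symCoeff_upper, j.1.is_le, j.2.is_le,
    Nat.choose_ne_zero j.2.is_le]

lemma coeffSpace_irreducible (n : ℕ) (U : Submodule ℂ (SL2 → ℂ)) (hle : U ≤ coeffSpace n)
    (hU : TranslationInvariant U) : U = ⊥ ∨ U = coeffSpace n :=
  or_iff_not_imp_left.2 fun hne => le_antisymm hle (coeffSpace_le_of_ne_bot hle hU hne)

def entryMonomial (i j k l : ℕ) (A : SL2) : ℂ :=
  A.1 0 0 ^ i * A.1 0 1 ^ j * A.1 1 0 ^ k * A.1 1 1 ^ l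

lemma entryMonomial_succ_succ (i j k l : ℕ) :
    entryMonomial (i + 1) j k (l + 1) =
      entryMonomial i (j + 1) (k + 1) l + entryMonomial i j k l := by
  ext A
  have hdet : A.1 0 0 * A.1 1 1 - A.1 0 1 * A.1 1 0 = 1 := by rw [← det_fin_two]; exact A.2
  simp only [entryMonomial, Pi.add_apply]
  linear_combination (A.1 0 0 ^ i * A.1 0 1 ^ j * A.1 1 0 ^ k * A.1 1 1 ^ l) * hdet

lemma symCoeffFn_eq_sum {N p q : ℕ} (hp : p < N + 1) (hq : q < N + 1) :
    symCoeffFn N (⟨p, hp⟩, ⟨q, hq⟩) = ∑ e ∈ Finset.range (q + 1), ∑ f ∈ Finset.range (N - q + 1),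
      ((if e + f = p then q.choose e * (N - q).choose f else 0 : ℕ) : ℂ) •
        entryMonomial e f (q - e) (N - q - f) := by
  ext A
  simp only [symCoeffFn, symCoeff_eq_sum (Nat.le_of_lt_succ hq), Finset.sum_apply, Pi.smul_apply,
    smul_eq_mul, entryMonomial]
  refine Finset.sum_congr rfl fun e _ => Finset.sum_congr rfl fun f _ => ?_
  split_ifs <;> simp [mul_assoc]

section Spanning

local notation "𝒲" => ⨆ m, coeffSpace m

/-- Modulo monomials of degree `N - 2`, the relation `ad - bc = 1` lets one trade `ad` for `bc`
in a monomial of degree `N`. -/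
lemma entryMonomial_smodEq_shift {N : ℕ}
    (hlow : ∀ i j k l, i + j + k + l + 2 = N → entryMonomial i j k l ∈ 𝒲) (t : ℕ) :
    ∀ i j k l, i + j + k + l + 2 * t = N →
      entryMonomial (i + t) j k (l + t) ≡ entryMonomial i (j + t) (k + t) l [SMOD 𝒲] := by
  induction t with
  | zero => intro i j k l _; rfl
  | succ t ih =>
    intro i j k l hN
    have hstep : entryMonomial (i + t + 1) j k (l + t + 1) ≡
        entryMonomial (i + t) (j + 1) (k + 1) (l + t) [SMOD 𝒲] := by
      rw [SModEq.sub_mem, entryMonomial_succ_succ, add_sub_cancel_left]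
      exact hlow _ _ _ _ (by omega)
    have h := ih i (j + 1) (k + 1) l (by omega)
    rw [show j + 1 + t = j + (t + 1) by omega, show k + 1 + t = k + (t + 1) by omega] at h
    exact hstep.trans h

lemma entryMonomial_smodEq {N : ℕ}
    (hlow : ∀ i j k l, i + j + k + l + 2 = N → entryMonomial i j k l ∈ 𝒲)
    {i j k l i' j' k' l' : ℕ} (hN : i + j + k + l = N) (hN' : i' + j' + k' + l' = N)
    (hrow : i + j = i' + j') (hcol : i + k = i' + k') :
    entryMonomial i j k l ≡ entryMonomial i' j' k' l' [SMOD 𝒲] := by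
  wlog h : i ≤ i' generalizing i j k l i' j' k' l'
  · exact (this hN' hN hrow.symm hcol.symm (by omega)).symm
  obtain ⟨t, rfl⟩ := Nat.exists_eq_add_of_le h
  obtain rfl : j = j' + t := by omega
  obtain rfl : k = k' + t := by omega
  obtain rfl : l' = l + t := by omega
  exact (entryMonomial_smodEq_shift hlow t i j' k' l (by omega)).symm

lemma entryMonomial_mem_iSup (N : ℕ) :
    ∀ i j k l, i + j + k + l = N → entryMonomial i j k l ∈ 𝒲 := by
  induction N using Nat.strong_induction_on with
  | _ N ih =>
  intro i j k l hN
  have hlow : ∀ i j k l, i + j + k + l + 2 = N → entryMonomial i j k l ∈ 𝒲 :=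
    fun i j k l h => ih _ (by omega) i j k l rfl
  have hcoeff : symCoeffFn N (⟨i + j, by omega⟩, ⟨i + k, by omega⟩) ≡
      ((∑ e ∈ Finset.range (i + k + 1), ∑ f ∈ Finset.range (N - (i + k) + 1),
        if e + f = i + j then (i + k).choose e * (N - (i + k)).choose f else 0 : ℕ) : ℂ) •
        entryMonomial i j k l [SMOD 𝒲] := by
    rw [symCoeffFn_eq_sum, Nat.cast_sum, Finset.sum_smul]
    refine SModEq.sum fun e he => ?_
    rw [Nat.cast_sum, Finset.sum_smul]
    refine SModEq.sum fun f hf => ?_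
    simp only [Finset.mem_range] at he hf
    split_ifs with h
    · exact (entryMonomial_smodEq hlow (by omega) hN (by omega) (by omega)).smul _
    · simp only [Nat.cast_zero, zero_smul]; rfl
  have hpos : (∑ e ∈ Finset.range (i + k + 1), ∑ f ∈ Finset.range (N - (i + k) + 1),
      if e + f = i + j then (i + k).choose e * (N - (i + k)).choose f else 0) ≠ 0 := by
    intro h0
    have := Finset.sum_eq_zero_iff.1 (Finset.sum_eq_zero_iff.1 h0 i (Finset.mem_range.2 (by omega)))
      j (Finset.mem_range.2 (by omega))
    rw [if_pos rfl] at this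
    exact (Nat.mul_pos (Nat.choose_pos (by omega)) (Nat.choose_pos (by omega))).ne' this
  have hmem := (SModEq.zero.1 (hcoeff.symm.trans (SModEq.zero.2
    (Submodule.mem_iSup_of_mem N (Submodule.subset_span ⟨_, rfl⟩)))))
  exact (Submodule.smul_mem_iff _ (Nat.cast_ne_zero.2 hpos)).1 hmem

lemma regFns_le_iSup_coeffSpace : RegFns ≤ 𝒲 := by
  rintro f ⟨P, hP⟩
  have hf : f = ∑ d ∈ P.support, coeff d P • entryMonomial (d 0) (d 1) (d 2) (d 3) := by
    ext A
    simp [hP A, eval_eq', Fin.prod_univ_four, entryMonomial, mul_assoc]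
  rw [hf]
  exact Submodule.sum_mem _ fun d _ => Submodule.smul_mem _ _ (entryMonomial_mem_iSup _ _ _ _ _ rfl)

end Spanning

section Independence

def expTriple (a b c : ℕ) : Fin 3 →₀ ℕ :=
  Finsupp.single 0 a + Finsupp.single 1 b + Finsupp.single 2 c

lemma expTriple_inj {a b c a' b' c' : ℕ} :
    expTriple a b c = expTriple a' b' c' ↔ a = a' ∧ b = b' ∧ c = c' := by
  refine ⟨fun h => ?_, fun h => by rw [h.1, h.2.1, h.2.2]⟩
  have h0 := DFunLike.congr_fun h 0
  have h1 := DFunLike.congr_fun h 1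
  have h2 := DFunLike.congr_fun h 2
  simp [expTriple] at h0 h1 h2
  exact ⟨h0, h1, h2⟩

lemma coeff_expTriple_mul (a b c a' b' c' k₁ k₂ k₃ : ℕ) :
    coeff (expTriple a b c)
      ((k₁ : MvPolynomial (Fin 3) ℂ) * X 0 ^ a' * ((k₂ : MvPolynomial (Fin 3) ℂ) * X 1 ^ b') *
        ((k₃ : MvPolynomial (Fin 3) ℂ) * X 2 ^ c')) =
      if a' = a ∧ b' = b ∧ c' = c then (k₁ * k₂ * k₃ : ℂ) else 0 := by
  have h : (k₁ : MvPolynomial (Fin 3) ℂ) * X 0 ^ a' * ((k₂ : MvPolynomial (Fin 3) ℂ) * X 1 ^ b') *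
      ((k₃ : MvPolynomial (Fin 3) ℂ) * X 2 ^ c') =
      monomial (expTriple a' b' c') (k₁ * k₂ * k₃ : ℂ) := by
    simp only [← map_natCast (C : ℂ →+* MvPolynomial (Fin 3) ℂ), X_pow_eq_monomial,
      C_mul_monomial, monomial_mul, expTriple, mul_one]
  rw [h, coeff_monomial]
  exact if_congr expTriple_inj rfl rfl

def uluMatrix : Matrix (Fin 2) (Fin 2) (MvPolynomial (Fin 3) ℂ) :=
  !![1, X 0; 0, 1] * !![1, 0; X 1, 1] * !![1, X 2; 0, 1]

lemma coeff_symCoeff_uluMatrix {n q : ℕ} (hq : q ≤ n) (p a b c : ℕ) :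
    coeff (expTriple a b c) (symCoeff n p q uluMatrix) =
      ∑ s ∈ Finset.range (n + 1), ∑ r ∈ Finset.range (n + 1),
        if r ≤ p ∧ r ≤ s ∧ q ≤ s ∧ p - r = a ∧ s - r = b ∧ s - q = c then
          ((n - r).choose (p - r) * s.choose r * (n - q).choose (s - q) : ℂ)
        else 0 := by
  rw [uluMatrix, symCoeff_mul hq, coeff_sum]
  refine Finset.sum_congr rfl fun s hs => ?_
  have hs' : s ≤ n := Nat.le_of_lt_succ (Finset.mem_range.1 hs)
  rw [symCoeff_mul hs', Finset.sum_mul, coeff_sum]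
  refine Finset.sum_congr rfl fun r hr => ?_
  have hr' : r ≤ n := Nat.le_of_lt_succ (Finset.mem_range.1 hr)
  rw [symCoeff_upper hr', symCoeff_lower hs', symCoeff_upper hq]
  by_cases h : r ≤ p ∧ r ≤ s ∧ q ≤ s
  · rw [if_pos h.1, if_pos h.2.1, if_pos h.2.2, coeff_expTriple_mul]
    simp only [h, true_and]
  · rw [if_neg (show ¬(r ≤ p ∧ r ≤ s ∧ q ≤ s ∧ _) from fun h' => h ⟨h'.1, h'.2.1, h'.2.2.1⟩)]
    split_ifs <;> simp_all

lemma coeff_symCoeff_uluMatrix_self {n q : ℕ} (hq : q ≤ n) (p : ℕ) :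
    coeff (expTriple p n (n - q)) (symCoeff n p q uluMatrix) = n.choose p := by
  rw [coeff_symCoeff_uluMatrix hq, Finset.sum_eq_single n, Finset.sum_eq_single 0]
  · simp [hq]
  · intro r _ hr; exact if_neg (by omega)
  · intro h; simp at h
  · intro s hs hsn
    refine Finset.sum_eq_zero fun r _ => if_neg ?_
    rw [Finset.mem_range] at hs
    omega
  · intro h; simp at h

/-- In `coeff_symCoeff_uluMatrix` the exponent `s - r ≤ n'` of `X 1` equals `n` only if `n ≤ n'`,
and for `n = n'` only at `r = 0`, `s = n`. -/
lemma eq_or_lt_of_coeff_symCoeff_uluMatrix_ne_zero {n p q n' p' q' : ℕ} (hq : q ≤ n)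
    (hq' : q' ≤ n') (h : coeff (expTriple p n (n - q)) (symCoeff n' p' q' uluMatrix) ≠ 0) :
    (n' = n ∧ p' = p ∧ q' = q) ∨ n < n' := by
  rw [coeff_symCoeff_uluMatrix hq'] at h
  obtain ⟨s, hs, h⟩ := Finset.exists_ne_zero_of_sum_ne_zero h
  obtain ⟨r, -, h⟩ := Finset.exists_ne_zero_of_sum_ne_zero h
  have := (ite_ne_right_iff.1 h).1
  rw [Finset.mem_range] at hs
  omega

abbrev CoeffIndex : Type := Σ n : ℕ, Fin (n + 1) × Fin (n + 1)

def uluElement (v : Fin 3 → ℂ) : SL2 :=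
  upperUnipotent (v 0) * lowerUnipotent (v 1) * upperUnipotent (v 2)

lemma eval_symCoeff_uluMatrix (t : CoeffIndex) (v : Fin 3 → ℂ) :
    eval v (symCoeff t.1 t.2.1 t.2.2 uluMatrix) = symCoeffFn t.1 t.2 (uluElement v) := by
  rw [symCoeffFn, map_symCoeff, uluMatrix, Matrix.map_mul, Matrix.map_mul,
    show (uluElement v).1 =
      (upperUnipotent (v 0)).1 * (lowerUnipotent (v 1)).1 * (upperUnipotent (v 2)).1 from rfl]
  congr 1
  ext i j
  fin_cases i <;> fin_cases j <;> simp [upperUnipotent, lowerUnipotent, Matrix.mul_apply]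

lemma linearIndependent_symCoeff_uluMatrix :
    LinearIndependent ℂ fun t : CoeffIndex => symCoeff t.1 t.2.1 t.2.2 uluMatrix := by
  refine linearIndependent_of_triangular
    (fun t => lcoeff ℂ (expTriple t.2.1 t.1 (t.1 - t.2.2))) (fun t => t.1) (fun t => ?_) ?_
  · rw [lcoeff_apply, coeff_symCoeff_uluMatrix_self t.2.2.is_le]
    exact Nat.cast_ne_zero.2 (Nat.choose_ne_zero t.2.1.is_le)
  · rintro ⟨n, p, q⟩ ⟨n', p', q'⟩ h
    rcases eq_or_lt_of_coeff_symCoeff_uluMatrix_ne_zero q.is_le q'.is_le h with ⟨rfl, hp, hq⟩ | h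
    · obtain rfl := Fin.ext hp
      obtain rfl := Fin.ext hq
      exact Or.inl rfl
    · exact Or.inr h

lemma linearIndependent_symCoeffFn :
    LinearIndependent ℂ fun t : CoeffIndex => symCoeffFn t.1 t.2 := by
  let ev : MvPolynomial (Fin 3) ℂ →ₗ[ℂ] (Fin 3 → ℂ) → ℂ :=
    LinearMap.pi fun v => (aeval v).toLinearMap
  have hev : LinearMap.ker ev = ⊥ := LinearMap.ker_eq_bot.2 fun P Q h => MvPolynomial.funext
    fun v => by simpa [ev] using congrFun h v
  let restrict := LinearMap.funLeft ℂ ℂ uluElement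
  have hcomp : restrict ∘ (fun t : CoeffIndex => symCoeffFn t.1 t.2) =
      ev ∘ fun t : CoeffIndex => symCoeff t.1 t.2.1 t.2.2 uluMatrix := by
    ext t v
    simp [restrict, ev, eval_symCoeff_uluMatrix]
  refine LinearIndependent.of_comp restrict ?_
  rw [hcomp]
  exact linearIndependent_symCoeff_uluMatrix.map' ev hev

lemma coeffSpace_iSupIndep : iSupIndep coeffSpace := by
  have hspan : ∀ n, coeffSpace n =
      Submodule.span ℂ ((fun t : CoeffIndex => symCoeffFn t.1 t.2) '' (Sigma.fst ⁻¹' {n})) := by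
    intro n
    rw [coeffSpace, ← Set.range_sigmaMk, ← Set.range_comp]
    rfl
  intro n
  simp_rw [hspan, ← Submodule.span_iUnion₂, ← Set.image_iUnion₂]
  refine linearIndependent_symCoeffFn.disjoint_span_image ?_
  rw [Set.disjoint_iUnion₂_right]
  intro m hm
  exact Set.disjoint_singleton.2 (Ne.symm hm) |>.preimage _

end Independence

theorem regular_functions_completely_reducible :
    ∃ (ι : Type) (W : ι → Submodule ℂ (SL2 → ℂ)),
      (∀ i, W i ≤ RegFns) ∧
      (∀ i, FiniteDimensional ℂ (W i)) ∧
      (∀ i, TranslationInvariant (W i)) ∧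
      (∀ i, ∀ U : Submodule ℂ (SL2 → ℂ), U ≤ W i → TranslationInvariant U →
        U = ⊥ ∨ U = W i) ∧
      iSupIndep W ∧ (⨆ i, W i) = RegFns :=
  ⟨ℕ, coeffSpace, coeffSpace_le_regFns, inferInstance, coeffSpace_translationInvariant,
    coeffSpace_irreducible, coeffSpace_iSupIndep,
    le_antisymm (iSup_le coeffSpace_le_regFns) regFns_le_iSup_coeffSpace⟩

end
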